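/- arXiv:1907.04778 — 2 statements merged into one kernel-verified Lean document; each statement's English description precedes it below -/
import Mathlib

section
/- Let A be an extended homotopy Gerstenhaber algebra and let a, b ∈ A be cocycles. Then E_1(a;b) + (−1)^{|a||b|} E_1(b;a) is a coboundary, namely the differential of F_{1,1}(a;b). Consequently the Gerstenhaber bracket on the cohomology H(A) induced by E_1 is trivial. -/
/-- A (minimal fragment of a) homotopy Gerstenhaber algebra: an augmented dga `A`
with operations `E1 : A ⊗ A → A` of degree `-1` and `E2 : A ⊗ A⊗2 → A` of degree `-2`
satisfying the hga axioms (with explicit Koszul signs). Homogeneity is recorded by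
the predicate `deg a p` ("`a` is homogeneous of degree `p`"). -/
structure HGA (A : Type*) [Ring A] where
  deg : A → ℕ → Prop
  d : A →+ A
  E1 : A → A → A
  E2 : A → A → A → A
  d_d : ∀ a, d (d a) = 0
  deg_d : ∀ a p, deg a p → deg (d a) (p + 1)
  deg_mul : ∀ a b p q, deg a p → deg b q → deg (a * b) (p + q)
  deg_E1 : ∀ a b p q r, deg a p → deg b q → p + q = r + 1 → deg (E1 a b) r
  deg_E2 : ∀ a b c p q s r, deg a p → deg b q → deg c s → p + q + s = r + 2 →
      deg (E2 a b c) r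
  leibniz : ∀ a b p, deg a p → d (a * b) = d a * b + ((-1 : ℤ) ^ p) • (a * d b)
  dE1 : ∀ a b p q, deg a p → deg b q →
      d (E1 a b) + E1 (d a) b + ((-1 : ℤ) ^ p) • E1 a (d b)
        = ((-1 : ℤ) ^ (p * q)) • (b * a) - a * b
  hirsch : ∀ a₁ a₂ b p₁ p₂ q, deg a₁ p₁ → deg a₂ p₂ → deg b q →
      E1 (a₁ * a₂) b
        = ((-1 : ℤ) ^ p₁) • (a₁ * E1 a₂ b) + ((-1 : ℤ) ^ (p₂ * q)) • (E1 a₁ b * a₂)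
  assoc11 : ∀ a b c q r, deg b q → deg c r →
      E1 (E1 a b) c
        = E1 a (E1 b c) + E2 a b c + ((-1 : ℤ) ^ ((q + 1) * (r + 1))) • E2 a c b
  dE2 : ∀ a b c p q r, deg a p → deg b q → deg c r →
      d (E2 a b c) + E2 (d a) b c + ((-1 : ℤ) ^ p) • E2 a (d b) c
          + ((-1 : ℤ) ^ (p + q)) • E2 a b (d c)
        = ((-1 : ℤ) ^ (q * (p + 1))) • (b * E1 a c) - E1 a (b * c) + E1 a b * c

/-- An extended homotopy Gerstenhaber algebra: an hga together with the operation
`F₁₁ : A ⊗ A → A` of degree `-2` whose differential is prescribed by the axiom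
`dF11` (the case `k = l = 1` of Kadeishvili's family `F_{kl}`). -/
structure ExtHGA (A : Type*) [Ring A] extends HGA A where
  F11 : A → A → A
  deg_F11 : ∀ a b p q r, deg a p → deg b q → p + q = r + 2 → deg (F11 a b) r
  dF11 : ∀ a b p q, deg a p → deg b q →
      d (F11 a b) - F11 (d a) b - ((-1 : ℤ) ^ p) • F11 a (d b)
        = E1 a b + ((-1 : ℤ) ^ (p * q)) • E1 b a

/-- In an extended homotopy Gerstenhaber algebra, for cocycles `a, b`
the element `E₁(a;b) + (-1)^{|a||b|} E₁(b;a)` is a coboundary, namely the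
differential of `F₁₁(a;b)`; consequently the Gerstenhaber bracket on `H(A)` is
trivial. -/
theorem extHGA_bracket_trivial {A : Type*} [Ring A] (h : ExtHGA A) (a b : A)
    (p q : ℕ) (ha : h.deg a p) (hb : h.deg b q)
    (hda : h.d a = 0) (hdb : h.d b = 0) :
    h.E1 a b + ((-1 : ℤ) ^ (p * q)) • h.E1 b a = h.d (h.F11 a b) := by
  -- sign cancellation helper
  have hsgn : ∀ m : ℕ, ((-1 : ℤ) ^ m) * ((-1 : ℤ) ^ m) = 1 := by
    intro m; rw [← pow_add]; exact Even.neg_one_pow ⟨m, rfl⟩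
  have cancel : ∀ (m : ℕ) (x : A), ((-1 : ℤ) ^ m) • x = 0 → x = 0 := by
    intro m x hx
    have h2 := congrArg (fun y => ((-1 : ℤ) ^ m) • y) hx
    simpa [smul_smul, hsgn m] using h2
  -- 0 is homogeneous of every degree ≥ p + 1
  have h0k : ∀ k, h.deg 0 (p + 1 + k) := by
    intro k
    induction k with
    | zero =>
        have h1 := h.deg_d a p ha
        rwa [hda] at h1
    | succ k ih =>
        have h1 := h.deg_d 0 _ ih
        rwa [map_zero] at h1
  have h0n : h.deg 0 (2 * p + 3) := by
    have h1 := h0k (p + 2)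
    rwa [show p + 1 + (p + 2) = 2 * p + 3 by omega] at h1
  have hnodd : ((-1 : ℤ) ^ (2 * p + 3)) = -1 := Odd.neg_one_pow ⟨p + 1, by ring⟩
  -- E1 0 x = 0 for homogeneous x
  have e1z : ∀ (x : A) (m : ℕ), h.deg x m → h.E1 0 x = 0 := by
    intro x m hx
    have h1 := h.hirsch 0 0 x (2 * p + 3) (2 * p + 3) m h0n h0n hx
    simpa using h1
  -- E1 x 0 = 0 for homogeneous cocycles x
  have e1z' : ∀ (x : A) (m : ℕ), h.deg x m → h.d x = 0 → h.E1 x 0 = 0 := by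
    intro x m hx hdx
    have e := h.dE1 x 0 m (2 * p + 3) hx h0n
    rw [hdx, map_zero, e1z 0 _ h0n, zero_mul, mul_zero, smul_zero, sub_zero] at e
    -- e : h.d (h.E1 x 0) + 0 + (-1)^m • h.E1 x 0 = 0
    rw [add_zero] at e
    have e2 := congrArg h.d e
    simp only [map_add, map_zsmul, h.d_d, map_zero, zero_add] at e2
    have e3 : h.d (h.E1 x 0) = 0 := cancel m _ e2
    rw [e3, zero_add] at e
    exact cancel m _ e
  -- d (F11 0 0) = 0
  have hF00d : h.d (h.F11 0 0) = 0 := by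
    have e := h.dF11 0 0 (2 * p + 3) (2 * p + 3) h0n h0n
    rw [map_zero, e1z 0 _ h0n, hnodd, smul_zero, add_zero, neg_smul, one_smul,
      sub_neg_eq_add, sub_add_cancel] at e
    exact e
  -- (-1)^p • F11 a 0 = - F11 0 0
  have hFa0 : ((-1 : ℤ) ^ p) • h.F11 a 0 = - h.F11 0 0 := by
    have e := h.dF11 a 0 p (2 * p + 3) ha h0n
    rw [hda, map_zero, e1z' a p ha hda, e1z a p ha, smul_zero, add_zero] at e
    -- e : h.d (h.F11 a 0) - h.F11 0 0 - (-1)^p • h.F11 a 0 = 0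
    have e2 := congrArg h.d e
    simp only [map_sub, map_zsmul, h.d_d, hF00d, map_zero, zero_sub, sub_zero,
      neg_eq_zero] at e2
    have e3 : h.d (h.F11 a 0) = 0 := cancel p _ e2
    rw [e3, zero_sub, sub_eq_zero] at e
    exact e.symm
  -- F11 0 b = F11 0 0
  have hF0b : h.F11 0 b = h.F11 0 0 := by
    have e := h.dF11 0 b (2 * p + 3) q h0n hb
    rw [map_zero, hdb, e1z b q hb, e1z' b q hb hdb, smul_zero, add_zero,
      hnodd, neg_smul, one_smul, sub_neg_eq_add] at e
    -- e : h.d (h.F11 0 b) - h.F11 0 b + h.F11 0 0 = 0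
    have e2 := congrArg h.d e
    simp only [map_add, map_sub, h.d_d, hF00d, map_zero, zero_sub, add_zero,
      neg_eq_zero] at e2
    rw [e2, zero_sub, neg_add_eq_zero] at e
    exact e
  -- main equation
  have e := h.dF11 a b p q ha hb
  rw [hda, hdb, hF0b, hFa0, sub_neg_eq_add, sub_add_cancel] at e
  exact e.symm
end

section
/- Let A be a homotopy Gerstenhaber algebra and define, for n ≥ 1, Φ_{(n)}(a_1⊗b_1, …, a_n⊗b_n) ≐ (−1)^{n−1} Σ E_{j_1}(a_1; b_•) ⋯ E_{j_n}(a_n; b_•) · b_n, the sum over all decompositions j_1+⋯+j_n = n−1 into non-negative integers with j_1+⋯+j_s < s for all s, where the arguments of E_{j_s}(a_s; …) are the b-variables with indices strictly smaller than s, taken in order. Then for n ≥ 2, Φ_{(n)} vanishes whenever a_i ⊗ b_i = 1 ⊗ 1 for some index i. -/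
/-- The bare operations of a homotopy Gerstenhaber algebra needed for the
normalization statements: operations `E a [b₁,…,b_k] = E_k(a; b₁,…,b_k)` with
`E_0 = id` and all `E_k` with `k ≥ 1` vanishing whenever any argument equals `1`. -/
structure HGAop (A : Type*) [Ring A] where
  E : A → List A → A
  E_nil : ∀ a, E a [] = a
  E_one : ∀ (a : A) (l : List A), l ≠ [] → (a = 1 ∨ (1 : A) ∈ l) → E a l = 0

namespace HGAop

variable {A : Type*} [Ring A]

/-- The summand of `Φ_(n)` indexed by a decomposition `j : Fin n → ℕ`:
`E_{j 0}(a 0; …) ⋯ E_{j (n-1)}(a (n-1); …) · b (n-1)`, where the arguments of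
`E_{j s}(a s; …)` are the `b`-variables with indices strictly smaller than `s`,
taken consecutively in order. -/
def phiTerm (h : HGAop A) (n : ℕ) (a b : ℕ → A) (j : Fin n → ℕ) : A :=
  (((List.finRange n).map (fun s : Fin n =>
      h.E (a s) ((List.range (j s)).map (fun t =>
        b ((∑ u ∈ Finset.univ.filter (fun u : Fin n => (u : ℕ) < (s : ℕ)), j u)
            + t))))).prod) * b (n - 1)

/-- The index set of `Φ_(n)`: decompositions `j_1 + ⋯ + j_n = n - 1` into `n`
non-negative integers such that `j_1 + ⋯ + j_s < s` for all `1 ≤ s ≤ n`. -/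
def phiIdx (n : ℕ) : Finset (Fin n → ℕ) :=
  (Finset.Nat.antidiagonalTuple n (n - 1)).filter
    (fun j => ∀ s : Fin n,
      (∑ u ∈ Finset.univ.filter (fun u : Fin n => (u : ℕ) ≤ (s : ℕ)), j u) ≤ (s : ℕ))

/-- The component `Φ_(n)` of the shm map `Φ : A ⊗ A ⇒ A`,
`Φ_(n)(a₁⊗b₁, …, a_n⊗b_n) ≐ (-1)^{n-1} Σ E_{j_1}(a₁;b_•) ⋯ E_{j_n}(a_n;b_•) · b_n`
(variables indexed from `0` here). -/
def Phi (h : HGAop A) (n : ℕ) (a b : ℕ → A) : A :=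
  ((-1 : ℤ) ^ (n - 1)) • ∑ j ∈ phiIdx n, h.phiTerm n a b j

end HGAop

/-- For `n ≥ 2`, the component `Φ_(n)` vanishes whenever
`a_i ⊗ b_i = 1 ⊗ 1` for some index `i`. -/
theorem Phi_vanish_of_unit_pair {A : Type*} [Ring A] (h : HGAop A)
    (n : ℕ) (a b : ℕ → A) (i : ℕ) (hn : 2 ≤ n) (hi : i < n)
    (hai : a i = 1) (hbi : b i = 1) :
    h.Phi n a b = 0 := by
  have hsum0 : (∑ j ∈ HGAop.phiIdx n, h.phiTerm n a b j) = 0 := by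
    apply Finset.sum_eq_zero
    intro j hj
    rw [HGAop.phiIdx, Finset.mem_filter, Finset.Nat.mem_antidiagonalTuple] at hj
    obtain ⟨hjs, hjp⟩ := hj
    set P : ℕ → ℕ :=
      fun s => ∑ u ∈ Finset.univ.filter (fun u : Fin n => (u : ℕ) < s), j u with hP
    have hPsucc : ∀ s (hs : s < n), P (s + 1) = P s + j ⟨s, hs⟩ := by
      intro s hs
      have hins : Finset.univ.filter (fun u : Fin n => (u : ℕ) < s + 1)
          = insert ⟨s, hs⟩ (Finset.univ.filter (fun u : Fin n => (u : ℕ) < s)) := by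
        ext u
        simp only [Finset.mem_filter, Finset.mem_univ, true_and, Finset.mem_insert,
          Fin.ext_iff]
        omega
      simp only [hP]
      rw [hins, Finset.sum_insert (by simp)]
      ring
    have hPle : ∀ s, s < n → P (s + 1) ≤ s := by
      intro s hs
      have h1 := hjp ⟨s, hs⟩
      have heq : Finset.univ.filter (fun u : Fin n => (u : ℕ) < s + 1)
          = Finset.univ.filter (fun u : Fin n => (u : ℕ) ≤ s) := by
        ext u; simp [Nat.lt_succ_iff]
      simp only [hP]
      rw [heq]
      exact h1
    have hPn : P n = n - 1 := by
      simp only [hP]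
      rw [Finset.filter_true_of_mem (fun u _ => u.isLt)]
      exact hjs
    have hP0 : P 0 = 0 := by simp [hP]
    -- find a factor that vanishes
    have key : ∃ s' : Fin n,
        h.E (a (s' : ℕ)) ((List.range (j s')).map (fun t =>
          b ((∑ u ∈ Finset.univ.filter (fun u : Fin n => (u : ℕ) < (s' : ℕ)), j u)
            + t))) = 0 := by
      by_cases hi' : i = n - 1
      · -- the last operation has `j ≥ 1` and its `a`-argument equals `1`
        have hlt : n - 1 < n := by omega
        refine ⟨⟨n - 1, hlt⟩, ?_⟩
        have h1 : P (n - 2 + 1) ≤ n - 2 := hPle (n - 2) (by omega)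
        have h2 : P (n - 1 + 1) = P (n - 1) + j ⟨n - 1, hlt⟩ := hPsucc (n - 1) hlt
        have h3 : n - 2 + 1 = n - 1 := by omega
        have h4 : n - 1 + 1 = n := by omega
        rw [h3] at h1
        rw [h4, hPn] at h2
        have hjpos : 1 ≤ j ⟨n - 1, hlt⟩ := by omega
        apply h.E_one
        · intro hc
          apply_fun List.length at hc
          simp only [List.length_map, List.length_range, List.length_nil] at hc
          omega
        · left
          have : ((⟨n - 1, hlt⟩ : Fin n) : ℕ) = i := by
            show n - 1 = i
            omega
          rw [this]; exact hai
      · -- `b i` appears among the arguments of some operation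
        have hi2 : i < n - 1 := by omega
        set s := Nat.findGreatest (fun s => P s ≤ i) n with hsdef
        have hspec : P s ≤ i := by
          apply Nat.findGreatest_spec (P := fun s => P s ≤ i) (m := 0) (Nat.zero_le n)
          rw [hP0]; omega
        have hsn : s ≤ n := Nat.findGreatest_le (P := fun s => P s ≤ i) n
        have hslt : s < n := by
          rcases eq_or_lt_of_le hsn with h' | h'
          · exfalso; rw [h', hPn] at hspec; omega
          · exact h'
        have hgt : ¬ P (s + 1) ≤ i :=
          Nat.findGreatest_is_greatest (P := fun s => P s ≤ i) (n := n)
            (Nat.lt_succ_self s) (by omega)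
        have hPs1 : P (s + 1) = P s + j ⟨s, hslt⟩ := hPsucc s hslt
        refine ⟨⟨s, hslt⟩, ?_⟩
        have hjpos : 1 ≤ j ⟨s, hslt⟩ := by omega
        apply h.E_one
        · intro hc
          apply_fun List.length at hc
          simp only [List.length_map, List.length_range, List.length_nil] at hc
          omega
        · right
          apply List.mem_map.mpr
          refine ⟨i - P s, List.mem_range.mpr (by omega), ?_⟩
          have : (∑ u ∈ Finset.univ.filter
              (fun u : Fin n => (u : ℕ) < ((⟨s, hslt⟩ : Fin n) : ℕ)), j u)
              + (i - P s) = i := by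
            have : P s ≤ i := hspec
            simp only [hP] at *
            omega
          rw [this, hbi]
    obtain ⟨s', hs'⟩ := key
    rw [HGAop.phiTerm]
    have hprod : ((List.finRange n).map (fun s : Fin n =>
        h.E (a (s : ℕ)) ((List.range (j s)).map (fun t =>
          b ((∑ u ∈ Finset.univ.filter (fun u : Fin n => (u : ℕ) < (s : ℕ)), j u)
            + t))))).prod = 0 := by
      apply List.prod_eq_zero
      exact List.mem_map.mpr ⟨s', List.mem_finRange s', hs'⟩
    rw [hprod, zero_mul]
  rw [HGAop.Phi, hsum0, smul_zero]
end
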